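/- For any finite subset A ⊆ ℕ and any two distinct elements i, j ∈ A, one has sign(i, A∖{i,j}) · sign(j, A∖{i,j}) + sign(i, A∖{i}) · sign(j, A∖{j}) = 0. -/

import Mathlib

/-- `fsign A B` is `0` if `A ∩ B ≠ ∅`, and otherwise `(−1)^{p(A,B)}` where `p(A,B)`
is the number of pairs `(a,b) ∈ A × B` with `a > b` (the number of transpositions
needed to sort the concatenation of the increasing enumerations of `A` and `B`). -/
def fsign (A B : Finset ℕ) : ℤ :=
  if A ∩ B = ∅ then (-1 : ℤ) ^ (((A ×ˢ B).filter fun p => p.2 < p.1).card) else 0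

lemma fsign_singleton (i : ℕ) (B : Finset ℕ) (hi : i ∉ B) :
    fsign {i} B = (-1 : ℤ) ^ ((B.filter (· < i)).card) := by
  unfold fsign
  rw [if_pos]
  · congr 1
    rw [Finset.singleton_product, Finset.filter_map, Finset.card_map]
    rfl
  · ext x
    simp only [Finset.mem_inter, Finset.mem_singleton, Finset.notMem_empty, iff_false]
    rintro ⟨rfl, h⟩
    exact hi h

/-- For any finite subset `A ⊆ ℕ` and any two distinct elements `i, j ∈ A`, one has
`sign(i, A∖{i,j}) · sign(j, A∖{i,j}) + sign(i, A∖{i}) · sign(j, A∖{j}) = 0`. -/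
theorem sign_erase_identity_two (A : Finset ℕ) (i j : ℕ)
    (hi : i ∈ A) (hj : j ∈ A) (hij : i ≠ j) :
    fsign {i} (A \ {i, j}) * fsign {j} (A \ {i, j}) +
      fsign {i} (A \ {i}) * fsign {j} (A \ {j}) = 0 := by
  set B := A \ {i, j} with hB
  have hiB : i ∉ B := by simp [hB]
  have hjB : j ∉ B := by simp [hB]
  have hAi : A \ {i} = insert j B := by
    ext x
    simp only [hB, Finset.mem_sdiff, Finset.mem_singleton, Finset.mem_insert,
      Finset.mem_inter]
    constructor
    · rintro ⟨hx, hxi⟩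
      by_cases hxj : x = j
      · exact Or.inl hxj
      · exact Or.inr ⟨hx, by simp [hxi, hxj]⟩
    · rintro (rfl | ⟨hx, hx2⟩)
      · exact ⟨hj, hij.symm⟩
      · simp only [Finset.mem_insert, Finset.mem_singleton, not_or] at hx2
        exact ⟨hx, hx2.1⟩
  have hAj : A \ {j} = insert i B := by
    ext x
    simp only [hB, Finset.mem_sdiff, Finset.mem_singleton, Finset.mem_insert]
    constructor
    · rintro ⟨hx, hxj⟩
      by_cases hxi : x = i
      · exact Or.inl hxi
      · exact Or.inr ⟨hx, by simp [hxi, hxj]⟩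
    · rintro (rfl | ⟨hx, hx2⟩)
      · exact ⟨hi, hij⟩
      · simp only [Finset.mem_insert, Finset.mem_singleton, not_or] at hx2
        exact ⟨hx, hx2.2⟩
  have hiAi : i ∉ A \ ({i} : Finset ℕ) := by simp
  have hjAj : j ∉ A \ ({j} : Finset ℕ) := by simp
  rw [fsign_singleton i B hiB, fsign_singleton j B hjB,
    fsign_singleton i _ hiAi, fsign_singleton j _ hjAj, hAi, hAj,
    Finset.filter_insert, Finset.filter_insert]
  rcases hij.lt_or_gt with h | h
  · rw [if_neg (by simpa using h.not_gt), if_pos h,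
      Finset.card_insert_of_notMem (by simp [hiB])]
    ring
  · rw [if_pos h, if_neg (by simpa using h.not_gt),
      Finset.card_insert_of_notMem (by simp [hjB])]
    ring
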